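/- arXiv:2405.20542 — 3 statements merged into one kernel-verified Lean document; each statement's English description precedes it below -/
import Mathlib

section
/- Let W ∈ ℝ_+^{V×K} have every column in Δ_{V−1} and let H ∈ ℝ_+^{K×D} have every column in Δ_{K−1}. Then Σ_v (WH)_{vd} = 1 for every d. Moreover, if X ∈ ℝ^{V×D} has strictly positive entries and (WH)_{vd} > 0 for all v, d, then with N_d := Σ_v x_{vd}, D_KL(X‖WH) = Σ_d N_d · Σ_v (x_{vd}/N_d) log((x_{vd}/N_d)/(WH)_{vd}) + Σ_d (N_d log N_d − N_d) + D, where D is the number of columns; in particular, minimizing D_KL(X‖WH) over such pairs (W, H) is equivalent to maximizing the PLSA objective Σ_{v,d} x_{vd} log(WH)_{vd}. -/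
/-! Column-stochastic `W` and `H` make `WH` column-stochastic, so the `Σ y` part of the KL loss
is the constant `D`, and the remaining terms split off `Σ x log x` (or, column by column,
`N_d log N_d` after normalizing by `N_d`), leaving `-Σ x log (WH)` as the only term that
depends on `(W, H)`. -/

/-- Matrix product `(WH)_{vd} = ∑ k, w_{vk} h_{kd}`. -/
noncomputable def matMul {V K D : ℕ} (W : Fin V → Fin K → ℝ) (H : Fin K → Fin D → ℝ) :
    Fin V → Fin D → ℝ := fun v d => ∑ k, W v k * H k d

/-- Generalized Kullback--Leibler divergence `D_KL(X ‖ Y)` (real-valued; here it is only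
used for strictly positive matrices, where no conventions are needed). -/
noncomputable def klDiv {V D : ℕ} (X Y : Fin V → Fin D → ℝ) : ℝ :=
  ∑ v, ∑ d, (X v d * Real.log (X v d / Y v d) - X v d + Y v d)

open Finset Real

theorem sum_matMul_apply_of_sum_eq_one {V K D : ℕ} {W : Fin V → Fin K → ℝ}
    (hW : ∀ k, ∑ v, W v k = 1) (H : Fin K → Fin D → ℝ) (d : Fin D) :
    ∑ v, matMul W H v d = ∑ k, H k d := by
  simp only [matMul]
  rw [sum_comm]
  simp only [← sum_mul, hW, one_mul]

theorem sum_sum_eq_card_of_sum_eq_one {V D : ℕ} {Y : Fin V → Fin D → ℝ}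
    (hY : ∀ d, ∑ v, Y v d = 1) : ∑ v, ∑ d, Y v d = D := by
  rw [sum_comm]
  simp [hY]

theorem mul_log_div_eq_mul_log_sub {x y : ℝ} (hy : y ≠ 0) :
    x * log (x / y) = x * log x - x * log y := by
  rcases eq_or_ne x 0 with rfl | hx
  · simp
  · rw [log_div hx hy, mul_sub]

theorem sum_mul_sum_div_mul_log_div {ι : Type*} (s : Finset ι) {x y : ι → ℝ}
    (hy : ∀ i ∈ s, y i ≠ 0) (hN : ∑ i ∈ s, x i ≠ 0) :
    (∑ i ∈ s, x i) *
        ∑ i ∈ s, (x i / ∑ j ∈ s, x j) * log ((x i / ∑ j ∈ s, x j) / y i) =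
      ∑ i ∈ s, x i * log (x i / y i) - (∑ i ∈ s, x i) * log (∑ i ∈ s, x i) := by
  set N := ∑ i ∈ s, x i
  have hterm : ∀ i ∈ s, N * ((x i / N) * log ((x i / N) / y i)) =
      x i * log (x i / y i) - x i * log N := by
    intro i hi
    rcases eq_or_ne (x i) 0 with hx | hx
    · simp [hx]
    · rw [div_right_comm, log_div (div_ne_zero hx (hy i hi)) hN]
      field_simp
  rw [mul_sum, sum_congr rfl hterm, sum_sub_distrib, ← sum_mul]

theorem klDiv_eq_sum_sum_mul_log_div_sub_add {V D : ℕ} (X Y : Fin V → Fin D → ℝ) :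
    klDiv X Y = ∑ d, ∑ v, X v d * log (X v d / Y v d) - ∑ d, ∑ v, X v d +
      ∑ v, ∑ d, Y v d := by
  simp only [klDiv, sum_add_distrib, sum_sub_distrib]
  rw [sum_comm (f := fun v d => X v d * log (X v d / Y v d)), sum_comm (f := X)]

theorem klDiv_eq_add_sum_sub_sum_mul_log {V D : ℕ} {X Y : Fin V → Fin D → ℝ}
    (hY : ∀ v d, Y v d ≠ 0) :
    klDiv X Y = ∑ v, ∑ d, (X v d * log (X v d) - X v d) + ∑ v, ∑ d, Y v d -
      ∑ v, ∑ d, X v d * log (Y v d) := by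
  simp only [klDiv, mul_log_div_eq_mul_log_sub (hY _ _), ← sum_add_distrib, ← sum_sub_distrib]
  refine sum_congr rfl fun v _ => sum_congr rfl fun d _ => ?_
  ring

theorem nmf_doubly_normalized_plsa_objective_general {V K D : ℕ}
    (W : Fin V → Fin K → ℝ) (H : Fin K → Fin D → ℝ)
    (hW1 : ∀ k, (∑ v, W v k) = 1)
    (hH1 : ∀ d, (∑ k, H k d) = 1) :
    -- the reconstruction has unit column sums
    (∀ d, (∑ v, matMul W H v d) = 1) ∧
    -- for positive data the KL loss decomposes into per-document (normalized) KL
    -- divergences plus constants, hence minimizing it is the same as maximizing the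
    -- PLSA objective ∑_{v,d} x_{vd} log (WH)_{vd}
    (∀ X : Fin V → Fin D → ℝ, (∀ v d, 0 < X v d) → (∀ v d, 0 < matMul W H v d) →
      klDiv X (matMul W H) =
        (∑ d, (∑ v, X v d) *
          (∑ v, (X v d / ∑ v', X v' d) *
            Real.log ((X v d / ∑ v', X v' d) / matMul W H v d))) +
        (∑ d, ((∑ v, X v d) * Real.log (∑ v, X v d) - ∑ v, X v d)) + (D : ℝ) ∧
      klDiv X (matMul W H) =
        ((∑ v, ∑ d, (X v d * Real.log (X v d) - X v d)) + (D : ℝ))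
          - ∑ v, ∑ d, X v d * Real.log (matMul W H v d)) := by
  have hcol d : ∑ v, matMul W H v d = 1 :=
    (sum_matMul_apply_of_sum_eq_one hW1 H d).trans (hH1 d)
  refine ⟨hcol, fun X hX hY => ⟨?_, ?_⟩⟩
  · have hN d : ∑ v, X v d ≠ 0 := by
      have hV : (univ : Finset (Fin V)).Nonempty :=
        nonempty_of_sum_ne_zero (f := fun v => matMul W H v d) (by simp [hcol d])
      exact (sum_pos (fun v _ => hX v d) hV).ne'
    rw [klDiv_eq_sum_sum_mul_log_div_sub_add, sum_sum_eq_card_of_sum_eq_one hcol]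
    simp only [sum_mul_sum_div_mul_log_div _ (fun v _ => (hY v _).ne') (hN _),
      sum_sub_distrib]
    ring
  · rw [klDiv_eq_add_sum_sub_sum_mul_log fun v d => (hY v d).ne',
      sum_sum_eq_card_of_sum_eq_one hcol]

theorem nmf_doubly_normalized_plsa_objective {V K D : ℕ}
    (W : Fin V → Fin K → ℝ) (H : Fin K → Fin D → ℝ)
    (hW0 : ∀ v k, 0 ≤ W v k) (hW1 : ∀ k, (∑ v, W v k) = 1)
    (hH0 : ∀ k d, 0 ≤ H k d) (hH1 : ∀ d, (∑ k, H k d) = 1) :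
    -- the reconstruction has unit column sums
    (∀ d, (∑ v, matMul W H v d) = 1) ∧
    -- for positive data the KL loss decomposes into per-document (normalized) KL
    -- divergences plus constants, hence minimizing it is the same as maximizing the
    -- PLSA objective ∑_{v,d} x_{vd} log (WH)_{vd}
    (∀ X : Fin V → Fin D → ℝ, (∀ v d, 0 < X v d) → (∀ v d, 0 < matMul W H v d) →
      klDiv X (matMul W H) =
        (∑ d, (∑ v, X v d) *
          (∑ v, (X v d / ∑ v', X v' d) *
            Real.log ((X v d / ∑ v', X v' d) / matMul W H v d))) +
        (∑ d, ((∑ v, X v d) * Real.log (∑ v, X v d) - ∑ v, X v d)) + (D : ℝ) ∧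
      klDiv X (matMul W H) =
        ((∑ v, ∑ d, (X v d * Real.log (X v d) - X v d)) + (D : ℝ))
          - ∑ v, ∑ d, X v d * Real.log (matMul W H v d)) :=
  nmf_doubly_normalized_plsa_objective_general W H hW1 hH1
end

section
/- Let X ∈ ℝ^{V×D} have strictly positive entries, let W^{(n)} ∈ ℝ^{V×K} have strictly positive entries with every column in Δ_{V−1}, and let H^{(n)} ∈ ℝ^{K×D} have strictly positive entries. Define the joint multiplicative updates w^{(n+1)}_{vk} = (w^{(n)}_{vk} Σ_d x_{vd} h^{(n)}_{kd}/(W^{(n)}H^{(n)})_{vd}) / (Σ_{v′} w^{(n)}_{v′k} Σ_d x_{v′d} h^{(n)}_{kd}/(W^{(n)}H^{(n)})_{v′d}) and h^{(n+1)}_{kd} = h^{(n)}_{kd} Σ_v x_{vd} w^{(n)}_{vk}/(W^{(n)}H^{(n)})_{vd}. Then every column of W^{(n+1)} lies in Δ_{V−1}, all entries of W^{(n+1)} and H^{(n+1)} are strictly positive, and D_KL(X‖W^{(n+1)}H^{(n+1)}) ≤ D_KL(X‖W^{(n)}H^{(n)}). -/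
/-!
The updates are one majorization–minimization step. With `A = WH`, `B = W'H'` and the
responsibilities `R_{vdk} = x_{vd} w_{vk} h_{kd} / A_{vd}`, the log-sum inequality in each entry
of `B` gives
`D(X‖B) - D(X‖A) ≤ ∑ R_{vdk} (log (w_{vk} / w'_{vk}) + log (h_{kd} / h'_{kd})) + ∑ B - ∑ A`,
and `∑ B - ∑ A = ∑ H' - ∑ H` because the columns of `W` and `W'` sum to one. For the updates,
`W'` is `c_{vk} = ∑_d R_{vdk}` normalized columnwise and `h'_{kd} = ∑_v R_{vdk}`, so Gibbs'
inequality `∑ p log (q / p) ≤ ∑ q - ∑ p` makes the `W'`-term nonpositive and bounds the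
`H'`-term by `∑ H - ∑ H'`.
-/

open Finset Real

lemma mul_log_div_le_sub {t s : ℝ} (ht : 0 < t) (hs : 0 < s) : t * log (s / t) ≤ s - t := by
  have := mul_le_mul_of_nonneg_left (log_le_sub_one_of_pos (div_pos hs ht)) ht.le
  rwa [mul_sub_one, mul_div_cancel₀ _ ht.ne'] at this

lemma sum_mul_log_div_le_sum_sub {ι : Type*} {s : Finset ι} {p q : ι → ℝ}
    (hp : ∀ i ∈ s, 0 < p i) (hq : ∀ i ∈ s, 0 < q i) :
    ∑ i ∈ s, p i * log (q i / p i) ≤ ∑ i ∈ s, q i - ∑ i ∈ s, p i := by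
  rw [← sum_sub_distrib]
  exact sum_le_sum fun i hi => mul_log_div_le_sub (hp i hi) (hq i hi)

lemma mul_log_sum_div_sum_le_sum_mul_log_div {ι : Type*} {s : Finset ι} {a b : ι → ℝ}
    (ha : ∀ i ∈ s, 0 < a i) (hb : ∀ i ∈ s, 0 < b i) :
    (∑ i ∈ s, a i) * log ((∑ i ∈ s, a i) / ∑ i ∈ s, b i) ≤ ∑ i ∈ s, a i * log (a i / b i) := by
  rcases s.eq_empty_or_nonempty with rfl | hs
  · simp
  set A := ∑ i ∈ s, a i
  set B := ∑ i ∈ s, b i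
  have hAB : 0 < A / B := div_pos (sum_pos ha hs) (sum_pos hb hs)
  have gibbs := sum_mul_log_div_le_sum_sub ha (q := fun i => A / B * b i)
    fun i hi => mul_pos hAB (hb i hi)
  rw [← mul_sum, div_mul_cancel₀ _ (sum_pos hb hs).ne', sub_self] at gibbs
  have hlog : ∀ i ∈ s, log (A / B * b i / a i) = log (A / B) - log (a i / b i) := fun i hi => by
    rw [mul_div_assoc, log_mul hAB.ne' (div_pos (hb i hi) (ha i hi)).ne', sub_eq_add_neg,
      ← log_inv, inv_div]
  rw [sum_congr rfl fun i hi => by rw [hlog i hi]] at gibbs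
  simp only [mul_sub, sum_sub_distrib, ← sum_mul] at gibbs
  linarith

lemma sum_mul_log_div_div_sum_le_zero {ι : Type*} {s : Finset ι} {p q : ι → ℝ}
    (hp : ∀ i ∈ s, 0 < p i) (hq : ∀ i ∈ s, 0 < q i) (hq_sum : ∑ i ∈ s, q i = 1) :
    ∑ i ∈ s, p i * log (q i / (p i / ∑ j ∈ s, p j)) ≤ 0 := by
  have hs : s.Nonempty := nonempty_of_sum_ne_zero (f := q) (by rw [hq_sum]; exact one_ne_zero)
  have hP : 0 < ∑ j ∈ s, p j := sum_pos hp hs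
  have gibbs := sum_mul_log_div_le_sum_sub hp (q := fun i => (∑ j ∈ s, p j) * q i)
    fun i hi => mul_pos hP (hq i hi)
  rw [← mul_sum, hq_sum, mul_one, sub_self] at gibbs
  simpa only [div_div_eq_mul_div, mul_comm (q _)] using gibbs

lemma sum_sum_sum_mul_add {α β γ R : Type*} [Fintype α] [Fintype β] [Fintype γ]
    [CommSemiring R] (r : α → β → γ → R) (f : α → γ → R) (g : γ → β → R) :
    ∑ a, ∑ b, ∑ c, r a b c * (f a c + g c b) =
      ∑ c, ∑ a, (∑ b, r a b c) * f a c + ∑ c, ∑ b, (∑ a, r a b c) * g c b := by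
  simp only [mul_add, sum_add_distrib, sum_mul]
  congr 1
  · exact (sum_congr rfl fun _ _ => sum_comm).trans sum_comm
  · exact sum_comm.trans <| (sum_congr rfl fun _ _ => sum_comm).trans sum_comm

section Factorization

variable {V K D : ℕ}

lemma matMul_pos {W : Fin V → Fin K → ℝ} {H : Fin K → Fin D → ℝ} (hK : 0 < K)
    (hW : ∀ v k, 0 < W v k) (hH : ∀ k d, 0 < H k d) (v : Fin V) (d : Fin D) :
    0 < matMul W H v d :=
  sum_pos (fun k _ => mul_pos (hW v k) (hH k d)) ⟨⟨0, hK⟩, mem_univ _⟩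

lemma sum_matMul_of_sum_eq_one {W : Fin V → Fin K → ℝ} (H : Fin K → Fin D → ℝ)
    (hW : ∀ k, ∑ v, W v k = 1) : ∑ v, ∑ d, matMul W H v d = ∑ k, ∑ d, H k d :=
  calc ∑ v, ∑ d, matMul W H v d = ∑ k, ∑ d, ∑ v, W v k * H k d :=
        sum_comm.trans <| (sum_congr rfl fun _ _ => sum_comm).trans sum_comm
    _ = ∑ k, ∑ d, H k d := by simp only [← sum_mul, hW, one_mul]

lemma klDiv_sub_klDiv {X Y Z : Fin V → Fin D → ℝ} (hX : ∀ v d, 0 < X v d)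
    (hY : ∀ v d, 0 < Y v d) (hZ : ∀ v d, 0 < Z v d) :
    klDiv X Z - klDiv X Y =
      ∑ v, ∑ d, X v d * log (Y v d / Z v d) + (∑ v, ∑ d, Z v d - ∑ v, ∑ d, Y v d) := by
  have hlog : ∀ v d, log (X v d / Z v d) = log (X v d / Y v d) + log (Y v d / Z v d) :=
    fun v d => by
      rw [← log_mul (div_pos (hX v d) (hY v d)).ne' (div_pos (hY v d) (hZ v d)).ne',
        div_mul_div_cancel₀ (hY v d).ne']
  simp only [klDiv, hlog, ← sum_sub_distrib, ← sum_add_distrib]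
  exact sum_congr rfl fun v _ => sum_congr rfl fun d _ => by ring

lemma mul_log_matMul_div_matMul_le {x : ℝ} (hx : 0 ≤ x) {W W' : Fin V → Fin K → ℝ}
    {H H' : Fin K → Fin D → ℝ} (hK : 0 < K) (hW : ∀ v k, 0 < W v k) (hH : ∀ k d, 0 < H k d)
    (hW' : ∀ v k, 0 < W' v k) (hH' : ∀ k d, 0 < H' k d) (v : Fin V) (d : Fin D) :
    x * log (matMul W H v d / matMul W' H' v d) ≤
      ∑ k, x * (W v k * H k d) / matMul W H v d *
        (log (W v k / W' v k) + log (H k d / H' k d)) := by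
  have hA := matMul_pos hK hW hH v d
  have hlogsum := mul_log_sum_div_sum_le_sum_mul_log_div (s := univ)
    (fun k _ => mul_pos (hW v k) (hH k d)) (fun k _ => mul_pos (hW' v k) (hH' k d))
  have hsplit : ∀ k, log (W v k * H k d / (W' v k * H' k d)) =
      log (W v k / W' v k) + log (H k d / H' k d) := fun k => by
    rw [← div_mul_div_comm, log_mul (div_pos (hW v k) (hW' v k)).ne'
      (div_pos (hH k d) (hH' k d)).ne']
  calc x * log (matMul W H v d / matMul W' H' v d)
      = x / matMul W H v d * (matMul W H v d * log (matMul W H v d / matMul W' H' v d)) := by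
        field_simp
    _ ≤ x / matMul W H v d * ∑ k, W v k * H k d * log (W v k * H k d / (W' v k * H' k d)) :=
        mul_le_mul_of_nonneg_left hlogsum (div_nonneg hx hA.le)
    _ = _ := by
        rw [mul_sum]
        exact sum_congr rfl fun k _ => by rw [hsplit]; ring

noncomputable def muUpdateH (X : Fin V → Fin D → ℝ) (W : Fin V → Fin K → ℝ)
    (H : Fin K → Fin D → ℝ) : Fin K → Fin D → ℝ :=
  fun k d => H k d * ∑ v, X v d * W v k / matMul W H v d

noncomputable def muUpdateWUnnormalized (X : Fin V → Fin D → ℝ) (W : Fin V → Fin K → ℝ)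
    (H : Fin K → Fin D → ℝ) : Fin V → Fin K → ℝ :=
  fun v k => W v k * ∑ d, X v d * H k d / matMul W H v d

lemma muUpdateH_pos {X : Fin V → Fin D → ℝ} {W : Fin V → Fin K → ℝ} {H : Fin K → Fin D → ℝ}
    (hV : 0 < V) (hK : 0 < K) (hX : ∀ v d, 0 < X v d) (hW : ∀ v k, 0 < W v k)
    (hH : ∀ k d, 0 < H k d) (k : Fin K) (d : Fin D) : 0 < muUpdateH X W H k d :=
  mul_pos (hH k d) <| sum_pos (fun v _ => div_pos (mul_pos (hX v d) (hW v k))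
    (matMul_pos hK hW hH v d)) ⟨⟨0, hV⟩, mem_univ _⟩

lemma muUpdateWUnnormalized_pos {X : Fin V → Fin D → ℝ} {W : Fin V → Fin K → ℝ}
    {H : Fin K → Fin D → ℝ} (hD : 0 < D) (hK : 0 < K) (hX : ∀ v d, 0 < X v d)
    (hW : ∀ v k, 0 < W v k) (hH : ∀ k d, 0 < H k d) (v : Fin V) (k : Fin K) :
    0 < muUpdateWUnnormalized X W H v k :=
  mul_pos (hW v k) <| sum_pos (fun d _ => div_pos (mul_pos (hX v d) (hH k d))
    (matMul_pos hK hW hH v d)) ⟨⟨0, hD⟩, mem_univ _⟩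

lemma klDiv_matMul_sub_le {X : Fin V → Fin D → ℝ} {W W' : Fin V → Fin K → ℝ}
    {H H' : Fin K → Fin D → ℝ} (hK : 0 < K) (hX : ∀ v d, 0 < X v d)
    (hW : ∀ v k, 0 < W v k) (hH : ∀ k d, 0 < H k d)
    (hW' : ∀ v k, 0 < W' v k) (hH' : ∀ k d, 0 < H' k d) :
    klDiv X (matMul W' H') - klDiv X (matMul W H) ≤
      ∑ k, ∑ v, muUpdateWUnnormalized X W H v k * log (W v k / W' v k) +
        ∑ k, ∑ d, muUpdateH X W H k d * log (H k d / H' k d) +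
        (∑ v, ∑ d, matMul W' H' v d - ∑ v, ∑ d, matMul W H v d) := by
  rw [klDiv_sub_klDiv hX (matMul_pos hK hW hH) (matMul_pos hK hW' hH')]
  gcongr ?_ + _
  calc ∑ v, ∑ d, X v d * log (matMul W H v d / matMul W' H' v d)
      ≤ ∑ v, ∑ d, ∑ k, X v d * (W v k * H k d) / matMul W H v d *
          (log (W v k / W' v k) + log (H k d / H' k d)) :=
        sum_le_sum fun v _ => sum_le_sum fun d _ =>
          mul_log_matMul_div_matMul_le (hX v d).le hK hW hH hW' hH' v d
    _ = _ := by
        rw [sum_sum_sum_mul_add]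
        simp only [muUpdateWUnnormalized, muUpdateH, mul_sum]
        congr 1 <;> exact sum_congr rfl fun _ _ => sum_congr rfl fun _ _ => by
          congr 1; exact sum_congr rfl fun _ _ => by ring

end Factorization

/-- One step of the joint multiplicative updates for NMF with an ℓ1 normalization
constraint on the columns of `W` (Algorithm 3): the updated `W` has simplex columns,
both updated matrices are strictly positive, and the KL objective does not increase. -/
theorem joint_mu_normalizedW_descent {V K D : ℕ} (hD : 0 < D)
    (X : Fin V → Fin D → ℝ) (hX : ∀ v d, 0 < X v d)
    (W : Fin V → Fin K → ℝ) (H : Fin K → Fin D → ℝ)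
    (hWpos : ∀ v k, 0 < W v k) (hWsum : ∀ k, (∑ v, W v k) = 1)
    (hHpos : ∀ k d, 0 < H k d) :
    let Wn : Fin V → Fin K → ℝ := fun v k =>
      (W v k * (∑ d, X v d * H k d / matMul W H v d)) /
        (∑ v', W v' k * (∑ d, X v' d * H k d / matMul W H v' d))
    let Hn : Fin K → Fin D → ℝ := fun k d =>
      H k d * (∑ v, X v d * W v k / matMul W H v d)
    ((∀ v k, 0 ≤ Wn v k) ∧ (∀ k, (∑ v, Wn v k) = 1)) ∧
    (∀ v k, 0 < Wn v k) ∧ (∀ k d, 0 < Hn k d) ∧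
    klDiv X (matMul Wn Hn) ≤ klDiv X (matMul W H) := by
  intro Wn Hn
  obtain rfl | hK := K.eq_zero_or_pos
  · simp [klDiv, matMul]
  obtain ⟨v₀, -⟩ := nonempty_of_sum_ne_zero (s := univ) (f := (W · ⟨0, hK⟩))
    (by rw [hWsum]; exact one_ne_zero)
  have hc := muUpdateWUnnormalized_pos hD hK hX hWpos hHpos
  have hC : ∀ k, 0 < ∑ v, muUpdateWUnnormalized X W H v k := fun k =>
    sum_pos (fun v _ => hc v k) ⟨v₀, mem_univ _⟩
  have hWn : ∀ v k, 0 < Wn v k := fun v k => div_pos (hc v k) (hC k)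
  have hWn_sum : ∀ k, ∑ v, Wn v k = 1 := fun k => by
    rw [← sum_div]
    exact div_self (hC k).ne'
  have hHn : ∀ k d, 0 < Hn k d := muUpdateH_pos v₀.pos hK hX hWpos hHpos
  refine ⟨⟨fun v k => (hWn v k).le, hWn_sum⟩, hWn, hHn, ?_⟩
  have hmajorize := klDiv_matMul_sub_le hK hX hWpos hHpos hWn hHn
  rw [sum_matMul_of_sum_eq_one Hn hWn_sum, sum_matMul_of_sum_eq_one H hWsum] at hmajorize
  have hWpart : ∑ k, ∑ v, muUpdateWUnnormalized X W H v k * log (W v k / Wn v k) ≤ 0 :=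
    sum_nonpos fun k _ =>
      sum_mul_log_div_div_sum_le_zero (fun v _ => hc v k) (fun v _ => hWpos v k) (hWsum k)
  have hHpart : ∑ k, ∑ d, muUpdateH X W H k d * log (H k d / Hn k d) ≤
      ∑ k, ∑ d, H k d - ∑ k, ∑ d, Hn k d := by
    rw [← sum_sub_distrib]
    exact sum_le_sum fun k _ =>
      sum_mul_log_div_le_sum_sub (p := Hn k) (fun d _ => hHn k d) (fun d _ => hHpos k d)
  linarith
end

section
/- Let X ∈ ℝ^{V×D} have strictly positive entries, let W^{(n)} ∈ ℝ^{V×K} have strictly positive entries with every column in Δ_{V−1}, and let H^{(n)} ∈ ℝ^{K×D} have strictly positive entries with every column in Δ_{K−1}. Define the joint multiplicative updates w^{(n+1)}_{vk} = (w^{(n)}_{vk} Σ_d x_{vd} h^{(n)}_{kd}/(W^{(n)}H^{(n)})_{vd}) / (Σ_{v′} w^{(n)}_{v′k} Σ_d x_{v′d} h^{(n)}_{kd}/(W^{(n)}H^{(n)})_{v′d}) and h^{(n+1)}_{kd} = (h^{(n)}_{kd} Σ_v x_{vd} w^{(n)}_{vk}/(W^{(n)}H^{(n)})_{vd}) / (Σ_{k′}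 h^{(n)}_{k′d} Σ_v x_{vd} w^{(n)}_{vk′}/(W^{(n)}H^{(n)})_{vd}). Then every column of W^{(n+1)} lies in Δ_{V−1}, every column of H^{(n+1)} lies in Δ_{K−1}, all entries are strictly positive, and D_KL(X‖W^{(n+1)}H^{(n+1)}) ≤ D_KL(X‖W^{(n)}H^{(n)}). -/
open Finset
private lemma log_jensen {n : ℕ} (q t : Fin n → ℝ) (hq : ∀ i, 0 ≤ q i)
    (hqs : ∑ i, q i = 1) (ht : ∀ i, 0 < t i) :
    ∑ i, q i * Real.log (t i) ≤ Real.log (∑ i, q i * t i) := by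
  have h := (strictConcaveOn_log_Ioi).concaveOn.le_map_sum
    (fun i (_ : i ∈ Finset.univ) => hq i) hqs (fun i _ => Set.mem_Ioi.mpr (ht i))
  simpa using h

private lemma gibbs {n : ℕ} (a w : Fin n → ℝ) (ha : ∀ i, 0 < a i)
    (hw : ∀ i, 0 < w i) (hws : ∑ i, w i = 1) :
    ∑ i, a i * Real.log (w i) ≤ ∑ i, a i * Real.log (a i / ∑ j, a j) := by
  rcases Nat.eq_zero_or_pos n with h | h
  · subst h; simp
  haveI : Nonempty (Fin n) := ⟨⟨0, h⟩⟩
  have hS : 0 < ∑ j, a j :=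
    Finset.sum_pos (fun j _ => ha j) (Finset.univ_nonempty)
  have key : ∀ i : Fin n,
      a i * Real.log (w i) - a i * Real.log (a i / ∑ j, a j)
        ≤ w i * (∑ j, a j) - a i := by
    intro i
    have hai := ha i
    have hwi := hw i
    have harg : 0 < w i * (∑ j, a j) / a i := by positivity
    have hlog := Real.log_le_sub_one_of_pos harg
    have heq : Real.log (w i * (∑ j, a j) / a i)
        = Real.log (w i) - Real.log (a i / ∑ j, a j) := by
      rw [Real.log_div (by positivity) hai.ne', Real.log_mul hwi.ne' hS.ne',
        Real.log_div hai.ne' hS.ne']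
      ring
    have h2 : a i * Real.log (w i * (∑ j, a j) / a i) ≤ w i * (∑ j, a j) - a i := by
      have h3 := mul_le_mul_of_nonneg_left hlog hai.le
      have h4 : a i * (w i * (∑ j, a j) / a i - 1) = w i * (∑ j, a j) - a i := by
        field_simp
      linarith [h3, h4.le]
    rw [heq] at h2
    rw [mul_sub] at h2
    linarith [h2]
  have hsum := Finset.sum_le_sum (fun i (_ : i ∈ Finset.univ) => key i)
  rw [Finset.sum_sub_distrib, Finset.sum_sub_distrib, ← Finset.sum_mul, hws] at hsum
  linarith



/-- One step of the joint multiplicative updates for NMF with ℓ1 normalization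
constraints on the columns of both `W` and `H` (Algorithm 5 = the PLSA EM algorithm):
the updated columns stay in the simplices, all entries stay strictly positive, and the
KL objective does not increase. -/
theorem joint_mu_normalizedWH_descent {V K D : ℕ} (hD : 0 < D)
    (X : Fin V → Fin D → ℝ) (hX : ∀ v d, 0 < X v d)
    (W : Fin V → Fin K → ℝ) (H : Fin K → Fin D → ℝ)
    (hWpos : ∀ v k, 0 < W v k) (hWsum : ∀ k, (∑ v, W v k) = 1)
    (hHpos : ∀ k d, 0 < H k d) (hHsum : ∀ d, (∑ k, H k d) = 1) :
    let Wn : Fin V → Fin K → ℝ := fun v k =>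
      (W v k * (∑ d, X v d * H k d / matMul W H v d)) /
        (∑ v', W v' k * (∑ d, X v' d * H k d / matMul W H v' d))
    let Hn : Fin K → Fin D → ℝ := fun k d =>
      (H k d * (∑ v, X v d * W v k / matMul W H v d)) /
        (∑ k', H k' d * (∑ v, X v d * W v k' / matMul W H v d))
    ((∀ v k, 0 ≤ Wn v k) ∧ (∀ k, (∑ v, Wn v k) = 1)) ∧
    ((∀ k d, 0 ≤ Hn k d) ∧ (∀ d, (∑ k, Hn k d) = 1)) ∧
    (∀ v k, 0 < Wn v k) ∧ (∀ k d, 0 < Hn k d) ∧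
    klDiv X (matMul Wn Hn) ≤ klDiv X (matMul W H) := by
  intro Wn Hn
  haveI hDne : Nonempty (Fin D) := ⟨⟨0, hD⟩⟩
  haveI hK : Nonempty (Fin K) := by
    by_contra h
    rw [not_nonempty_iff] at h
    have := hHsum ⟨0, hD⟩
    rw [Finset.univ_eq_empty, Finset.sum_empty] at this
    norm_num at this
  haveI hV : Nonempty (Fin V) := by
    by_contra h
    rw [not_nonempty_iff] at h
    obtain ⟨k⟩ := hK
    have := hWsum k
    rw [Finset.univ_eq_empty, Finset.sum_empty] at this
    norm_num at this
  have hP : ∀ v d, 0 < matMul W H v d := fun v d =>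
    Finset.sum_pos (fun k _ => mul_pos (hWpos v k) (hHpos k d)) Finset.univ_nonempty
  -- numerators
  set a : Fin V → Fin K → ℝ :=
    fun v k => W v k * (∑ d, X v d * H k d / matMul W H v d) with ha_def
  set b : Fin K → Fin D → ℝ :=
    fun k d => H k d * (∑ v, X v d * W v k / matMul W H v d) with hb_def
  have ha_pos : ∀ v k, 0 < a v k := fun v k =>
    mul_pos (hWpos v k) (Finset.sum_pos
      (fun d _ => div_pos (mul_pos (hX v d) (hHpos k d)) (hP v d)) Finset.univ_nonempty)
  have hb_pos : ∀ k d, 0 < b k d := fun k d =>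
    mul_pos (hHpos k d) (Finset.sum_pos
      (fun v _ => div_pos (mul_pos (hX v d) (hWpos v k)) (hP v d)) Finset.univ_nonempty)
  have hNa : ∀ k, 0 < ∑ v', a v' k := fun k =>
    Finset.sum_pos (fun v _ => ha_pos v k) Finset.univ_nonempty
  have hMb : ∀ d, 0 < ∑ k', b k' d := fun d =>
    Finset.sum_pos (fun k _ => hb_pos k d) Finset.univ_nonempty
  have hWn : ∀ v k, Wn v k = a v k / (∑ v', a v' k) := fun v k => rfl
  have hHn : ∀ k d, Hn k d = b k d / (∑ k', b k' d) := fun k d => rfl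
  have hWn_pos : ∀ v k, 0 < Wn v k := fun v k => by
    rw [hWn]; exact div_pos (ha_pos v k) (hNa k)
  have hHn_pos : ∀ k d, 0 < Hn k d := fun k d => by
    rw [hHn]; exact div_pos (hb_pos k d) (hMb d)
  have hWn_sum : ∀ k, ∑ v, Wn v k = 1 := by
    intro k
    simp only [hWn]
    rw [← Finset.sum_div, div_self (hNa k).ne']
  have hHn_sum : ∀ d, ∑ k, Hn k d = 1 := by
    intro d
    simp only [hHn]
    rw [← Finset.sum_div, div_self (hMb d).ne']
  refine ⟨⟨fun v k => (hWn_pos v k).le, hWn_sum⟩, ⟨fun k d => (hHn_pos k d).le, hHn_sum⟩,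
    hWn_pos, hHn_pos, ?_⟩
  -- strict positivity of the new product
  have hPn : ∀ v d, 0 < matMul Wn Hn v d := fun v d =>
    Finset.sum_pos (fun k _ => mul_pos (hWn_pos v k) (hHn_pos k d)) Finset.univ_nonempty
  -- responsibilities
  set q : Fin V → Fin D → Fin K → ℝ :=
    fun v d k => W v k * H k d / matMul W H v d with hq_def
  have hq_pos : ∀ v d k, 0 < q v d k := fun v d k =>
    div_pos (mul_pos (hWpos v k) (hHpos k d)) (hP v d)
  have hq_sum : ∀ v d, ∑ k, q v d k = 1 := by
    intro v d
    simp only [hq_def]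
    rw [← Finset.sum_div]
    exact div_self (hP v d).ne'
  -- pointwise EM inequality
  have pointwise : ∀ v d,
      X v d * Real.log (matMul W H v d)
        + (∑ k, X v d * q v d k * (Real.log (Wn v k) - Real.log (W v k)))
        + (∑ k, X v d * q v d k * (Real.log (Hn k d) - Real.log (H k d)))
      ≤ X v d * Real.log (matMul Wn Hn v d) := by
    intro v d
    have jensen : ∑ k, q v d k * Real.log (Wn v k * Hn k d / q v d k)
        ≤ Real.log (matMul Wn Hn v d) := by
      have h := log_jensen (q v d) (fun k => Wn v k * Hn k d / q v d k)
        (fun k => (hq_pos v d k).le) (hq_sum v d)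
        (fun k => div_pos (mul_pos (hWn_pos v k) (hHn_pos k d)) (hq_pos v d k))
      have heq : ∑ k, q v d k * (Wn v k * Hn k d / q v d k) = matMul Wn Hn v d := by
        refine Finset.sum_congr rfl fun k _ => ?_
        rw [mul_comm, div_mul_cancel₀ _ (hq_pos v d k).ne']
      rw [heq] at h
      exact h
    have expand : ∀ k, q v d k * Real.log (Wn v k * Hn k d / q v d k)
        = q v d k * Real.log (matMul W H v d)
          + q v d k * (Real.log (Wn v k) - Real.log (W v k))
          + q v d k * (Real.log (Hn k d) - Real.log (H k d)) := by
      intro k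
      have hlogP : Real.log (matMul W H v d)
          = Real.log (W v k) + Real.log (H k d) - Real.log (q v d k) := by
        simp only [hq_def]
        rw [Real.log_div (mul_pos (hWpos v k) (hHpos k d)).ne' (hP v d).ne',
          Real.log_mul (hWpos v k).ne' (hHpos k d).ne']
        ring
      rw [Real.log_div (mul_pos (hWn_pos v k) (hHn_pos k d)).ne' (hq_pos v d k).ne',
        Real.log_mul (hWn_pos v k).ne' (hHn_pos k d).ne', hlogP]
      ring
    have hsum_expand : ∑ k, q v d k * Real.log (Wn v k * Hn k d / q v d k)
        = Real.log (matMul W H v d)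
          + (∑ k, q v d k * (Real.log (Wn v k) - Real.log (W v k)))
          + (∑ k, q v d k * (Real.log (Hn k d) - Real.log (H k d))) := by
      simp only [expand, Finset.sum_add_distrib]
      rw [← Finset.sum_mul, hq_sum v d, one_mul]
    rw [hsum_expand] at jensen
    have hmul := mul_le_mul_of_nonneg_left jensen (hX v d).le
    have hmg : ∀ (c : Fin K → ℝ), X v d * ∑ k, q v d k * c k
        = ∑ k, X v d * q v d k * c k := by
      intro c
      rw [Finset.mul_sum]
      exact Finset.sum_congr rfl fun k _ => by ring
    rw [mul_add, mul_add, hmg, hmg] at hmul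
    exact hmul
  -- summed inequality
  have main : (∑ v, ∑ d, X v d * Real.log (matMul W H v d))
      + (∑ v, ∑ d, ∑ k, X v d * q v d k * (Real.log (Wn v k) - Real.log (W v k)))
      + (∑ v, ∑ d, ∑ k, X v d * q v d k * (Real.log (Hn k d) - Real.log (H k d)))
      ≤ ∑ v, ∑ d, X v d * Real.log (matMul Wn Hn v d) := by
    have h := Finset.sum_le_sum (fun v (_ : v ∈ Finset.univ) =>
      Finset.sum_le_sum (fun d (_ : d ∈ Finset.univ) => pointwise v d))
    simpa only [Finset.sum_add_distrib] using h
  -- aggregated responsibilities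
  have hXqa : ∀ v k, ∑ d, X v d * q v d k = a v k := by
    intro v k
    simp only [hq_def, ha_def]
    rw [Finset.mul_sum]
    exact Finset.sum_congr rfl fun d _ => by ring
  have hXqb : ∀ k d, ∑ v, X v d * q v d k = b k d := by
    intro k d
    simp only [hq_def, hb_def]
    rw [Finset.mul_sum]
    exact Finset.sum_congr rfl fun v _ => by ring
  -- W part nonnegative (Gibbs)
  have TW : 0 ≤ ∑ v, ∑ d, ∑ k, X v d * q v d k * (Real.log (Wn v k) - Real.log (W v k)) := by
    have step : (∑ v, ∑ d, ∑ k, X v d * q v d k * (Real.log (Wn v k) - Real.log (W v k)))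
        = ∑ k, ∑ v, a v k * (Real.log (Wn v k) - Real.log (W v k)) := by
      have h1 : ∀ v : Fin V,
          (∑ d, ∑ k, X v d * q v d k * (Real.log (Wn v k) - Real.log (W v k)))
          = ∑ k, ∑ d, X v d * q v d k * (Real.log (Wn v k) - Real.log (W v k)) :=
        fun v => Finset.sum_comm
      simp only [h1]
      rw [Finset.sum_comm]
      refine Finset.sum_congr rfl fun k _ => Finset.sum_congr rfl fun v _ => ?_
      rw [← Finset.sum_mul, hXqa]
    rw [step]
    refine Finset.sum_nonneg fun k _ => ?_
    have hg := gibbs (fun v => a v k) (fun v => W v k)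
      (fun v => ha_pos v k) (fun v => hWpos v k) (hWsum k)
    have hrw : ∑ v, a v k * (Real.log (Wn v k) - Real.log (W v k))
        = (∑ v, a v k * Real.log (a v k / ∑ v', a v' k))
          - ∑ v, a v k * Real.log (W v k) := by
      rw [← Finset.sum_sub_distrib]
      refine Finset.sum_congr rfl fun v _ => ?_
      rw [hWn]
      ring
    rw [hrw]
    linarith [hg]
  -- H part nonnegative (Gibbs)
  have TH : 0 ≤ ∑ v, ∑ d, ∑ k, X v d * q v d k * (Real.log (Hn k d) - Real.log (H k d)) := by
    have step : (∑ v, ∑ d, ∑ k, X v d * q v d k * (Real.log (Hn k d) - Real.log (H k d)))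
        = ∑ d, ∑ k, b k d * (Real.log (Hn k d) - Real.log (H k d)) := by
      rw [Finset.sum_comm]
      refine Finset.sum_congr rfl fun d _ => ?_
      rw [Finset.sum_comm]
      refine Finset.sum_congr rfl fun k _ => ?_
      rw [← Finset.sum_mul, hXqb]
    rw [step]
    refine Finset.sum_nonneg fun d _ => ?_
    have hg := gibbs (fun k => b k d) (fun k => H k d)
      (fun k => hb_pos k d) (fun k => hHpos k d) (hHsum d)
    have hrw : ∑ k, b k d * (Real.log (Hn k d) - Real.log (H k d))
        = (∑ k, b k d * Real.log (b k d / ∑ k', b k' d))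
          - ∑ k, b k d * Real.log (H k d) := by
      rw [← Finset.sum_sub_distrib]
      refine Finset.sum_congr rfl fun k _ => ?_
      rw [hHn]
      ring
    rw [hrw]
    linarith [hg]
  -- total masses agree (both equal D)
  have massD : ∀ (A : Fin V → Fin K → ℝ) (B : Fin K → Fin D → ℝ),
      (∀ k, ∑ v, A v k = 1) → (∀ d, ∑ k, B k d = 1) →
      ∑ v, ∑ d, matMul A B v d = (D : ℝ) := by
    intro A B hA hB
    simp only [matMul]
    rw [Finset.sum_comm]
    have hcol : ∀ d : Fin D, (∑ v, ∑ k, A v k * B k d) = 1 := by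
      intro d
      rw [Finset.sum_comm]
      have hterm : ∀ k : Fin K, (∑ v, A v k * B k d) = B k d := fun k => by
        rw [← Finset.sum_mul, hA, one_mul]
      simp only [hterm]
      exact hB d
    simp only [hcol]
    simp
  have mass_eq : ∑ v, ∑ d, matMul Wn Hn v d = ∑ v, ∑ d, matMul W H v d := by
    rw [massD Wn Hn hWn_sum hHn_sum, massD W H hWsum hHsum]
  -- expand klDiv and conclude
  have klExpand : ∀ (Y : Fin V → Fin D → ℝ), (∀ v d, 0 < Y v d) →
      klDiv X Y = (∑ v, ∑ d, (X v d * Real.log (X v d) - X v d))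
        - (∑ v, ∑ d, X v d * Real.log (Y v d)) + ∑ v, ∑ d, Y v d := by
    intro Y hY
    have h1 : ∀ v d, X v d * Real.log (X v d / Y v d) - X v d + Y v d
        = (X v d * Real.log (X v d) - X v d) - X v d * Real.log (Y v d) + Y v d := by
      intro v d
      rw [Real.log_div (hX v d).ne' (hY v d).ne']
      ring
    simp only [klDiv, h1, Finset.sum_add_distrib, Finset.sum_sub_distrib]
  rw [klExpand _ hPn, klExpand _ hP]
  linarith [main, TW, TH, mass_eq]
end
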